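/- For every s > 0, every n ≥ 0 and every word 𝚒 ∈ Λ^n, the conditional expectation given 𝓑_n of the sum Σ_{i ∈ Λ} 1{𝚒i ∈ T_{n+1}(ω)} · diam(Q_{(𝚒i)~})^s equals, on the event 𝚒 ∈ T_n(ω), diam(Q_𝚒̃)^s · p · M^{d−s} · κ(s,K), where κ(s,K) = 1 − ((M−2)^d/M^d)(1 − M^{−sK})(1−p)^{M^d − (M−2)^d}. -/

import Mathlib

/-!
On the event that `w` survives, a child `w ++ [i]` survives iff `X (w ++ [i]) = true`, and
`(w ++ [i])~` is `w̃` followed by `η i` or by `i` according as all boundary children of `w` died.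
Hence the sum over the children factors as `diam (Q_w̃) ^ s` times a function of the
level-`(n+1)` variables alone. The first factor is `𝓑_n`-measurable and the second is independent
of `𝓑_n`, so the conditional expectation is the first factor times the mean of the second. That
mean follows from `P(X (w ++ [i]) = true, all boundary children die) = p (1 - p) ^ #Λ_B` for an
interior `i` (the event is empty for a boundary `i`).
-/

open MeasureTheory ProbabilityTheory Set Filter
open scoped ENNReal NNReal Topology Classical

noncomputable section

namespace FractalPercolation

/-! ### Words -/

/-- The finite word `𝚒|_n` obtained by truncating an infinite word. -/
def wordTake (d M : ℕ) (i : ℕ → Fin (M ^ d)) (n : ℕ) : List (Fin (M ^ d)) :=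
  List.ofFn fun k : Fin n => i k

/-- The shift `σ^n 𝚒` of an infinite word. -/
def shiftW (d M : ℕ) (n : ℕ) (i : ℕ → Fin (M ^ d)) : ℕ → Fin (M ^ d) := fun t => i (n + t)

/-- The concatenation `𝚠𝚖` of a finite word with an infinite word. -/
def extendW (d M : ℕ) (w : List (Fin (M ^ d))) (m : ℕ → Fin (M ^ d)) : ℕ → Fin (M ^ d) :=
  fun t => if h : t < w.length then w.get ⟨t, h⟩ else m (t - w.length)

/-! ### Geometry: cubes and the natural projection -/

/-- Lower-left corner of the `M`-adic cube labelled by the finite word `w`; the labelling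
`lab` sends a symbol to the vector of integer offsets (in `{0,…,M-1}^d`) of the corresponding
subcube. -/
def corner (d M : ℕ) (lab : Fin (M ^ d) → Fin d → Fin M) :
    List (Fin (M ^ d)) → Fin d → ℝ
  | [] => fun _ => 0
  | i :: w => fun k => ((lab i k : ℝ) + corner d M lab w k) / (M : ℝ)

/-- The closed `M`-adic cube `Q_𝚠 ⊆ [0,1]^d` labelled by the finite word `w`. -/
def cube (d M : ℕ) (lab : Fin (M ^ d) → Fin d → Fin M) (w : List (Fin (M ^ d))) :
    Set (Fin d → ℝ) :=
  {x | ∀ k, corner d M lab w k ≤ x k ∧ x k ≤ corner d M lab w k + ((M : ℝ) ^ w.length)⁻¹}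

/-- The homothety `h_{Q_𝚠}` sending `[0,1]^d` onto `Q_𝚠`. -/
def hQ (d M : ℕ) (lab : Fin (M ^ d) → Fin d → Fin M) (w : List (Fin (M ^ d)))
    (y : Fin d → ℝ) : Fin d → ℝ :=
  fun k => corner d M lab w k + ((M : ℝ) ^ w.length)⁻¹ * y k

/-- The natural projection `Π : Λ^ℕ → [0,1]^d`, `{Π(𝚒)} = ⋂_n Q_{𝚒|_n}`. -/
def PiInf (d M : ℕ) (lab : Fin (M ^ d) → Fin d → Fin M) (i : ℕ → Fin (M ^ d)) :
    Fin d → ℝ :=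
  fun k => ⨆ n, corner d M lab (wordTake d M i n) k

/-- The cube concentric with the cube of lower-left corner `c` and side length `ℓ`,
with side length `κ·ℓ`. -/
def concCube (d : ℕ) (c : Fin d → ℝ) (ℓ κ : ℝ) : Set (Fin d → ℝ) :=
  {x | ∀ k, c k + (1 - κ) * ℓ / 2 ≤ x k ∧ x k ≤ c k + (1 + κ) * ℓ / 2}

/-! ### The labelling -/

/-- The set `Λ_B` of labels of subcubes meeting the boundary. -/
def LamB (d M : ℕ) : Set (Fin (M ^ d)) := {i | (i : ℕ) < M ^ d - (M - 2) ^ d}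

/-- `lab` is a genuine labelling of the `M^d` subcubes such that the symbols in `Λ_B`
are exactly those of subcubes meeting the boundary of `[0,1]^d`. -/
def LabSpec (d M : ℕ) (lab : Fin (M ^ d) → Fin d → Fin M) : Prop :=
  Function.Bijective lab ∧
    ∀ i, i ∈ LamB d M ↔ ∃ k, (lab i k : ℕ) = 0 ∨ (lab i k : ℕ) = M - 1

/-! ### The percolation process -/

/-- The finite word `w` survives (i.e. `w ∈ T_{|w|}(ω)`): all its nonempty prefixes
are retained. -/
def Alive (d M : ℕ) {Ω : Type*} (X : List (Fin (M ^ d)) → Ω → Bool) (ω : Ω)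
    (w : List (Fin (M ^ d))) : Prop :=
  ∀ u : List (Fin (M ^ d)), u ≠ [] → u <+: w → X u ω = true

/-- The infinite word `𝚒` survives, i.e. `𝚒 ∈ T(ω)`. -/
def TInf (d M : ℕ) {Ω : Type*} (X : List (Fin (M ^ d)) → Ω → Bool) (ω : Ω)
    (i : ℕ → Fin (M ^ d)) : Prop :=
  ∀ n, Alive d M X ω (wordTake d M i n)

/-- The fractal percolation set `E(ω) = Π(T(ω))`. -/
def Eset (d M : ℕ) (lab : Fin (M ^ d) → Fin d → Fin M) {Ω : Type*}
    (X : List (Fin (M ^ d)) → Ω → Bool) (ω : Ω) : Set (Fin d → ℝ) :=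
  {x | ∃ i, TInf d M X ω i ∧ PiInf d M lab i = x}

/-- `(X_𝚒)_{𝚒∈Λ^*}` are i.i.d. Bernoulli(p) random variables under `P`. -/
def PercSpec (d M : ℕ) {Ω : Type*} [MeasurableSpace Ω] (P : Measure Ω)
    (X : List (Fin (M ^ d)) → Ω → Bool) (p : ℝ) : Prop :=
  (∀ w, Measurable (X w)) ∧
    iIndepFun X P ∧
    ∀ w, P {ω | X w ω = true} = ENNReal.ofReal p

/-- The σ-algebra `𝓑_n` generated by `{X_𝚒 : |𝚒| ≤ n}`. -/
def Bsig (d M : ℕ) {Ω : Type*} (X : List (Fin (M ^ d)) → Ω → Bool) (n : ℕ) :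
    MeasurableSpace Ω :=
  ⨆ w ∈ {w : List (Fin (M ^ d)) | w.length ≤ n}, MeasurableSpace.comap (X w) ⊤

/-! ### The substitution map -/

/-- All subcubes of `Q_𝚠` meeting the boundary of `Q_𝚠` die at the next step. -/
def BdryDead (d M : ℕ) {Ω : Type*} (X : List (Fin (M ^ d)) → Ω → Bool) (ω : Ω)
    (w : List (Fin (M ^ d))) : Prop :=
  ∀ j ∈ LamB d M, ¬ Alive d M X ω (w ++ [j])

/-- Auxiliary recursion for the substitution `𝚒 ↦ 𝚒̃`: `pfx` is the already processed
prefix of the original word. -/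
def substAux (d M : ℕ) {Ω : Type*} (X : List (Fin (M ^ d)) → Ω → Bool)
    (e : List (Fin (M ^ d))) (ω : Ω) :
    List (Fin (M ^ d)) → List (Fin (M ^ d)) → List (Fin (M ^ d))
  | _, [] => []
  | pfx, i :: rest =>
      (if BdryDead d M X ω pfx then e ++ [i] else [i]) ++
        substAux d M X e ω (pfx ++ [i]) rest

/-- The substitution `𝚠 ↦ 𝚠̃` (with substitution word `e = η`) applied to a finite word. -/
def substW (d M : ℕ) {Ω : Type*} (X : List (Fin (M ^ d)) → Ω → Bool)
    (e : List (Fin (M ^ d))) (ω : Ω) (w : List (Fin (M ^ d))) : List (Fin (M ^ d)) :=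
  substAux d M X e ω ([]) w

/-- The point `Π(𝚒̃)` for an infinite word `𝚒`. -/
def PiTilde (d M : ℕ) (lab : Fin (M ^ d) → Fin d → Fin M) {Ω : Type*}
    (X : List (Fin (M ^ d)) → Ω → Bool) (e : List (Fin (M ^ d))) (ω : Ω)
    (i : ℕ → Fin (M ^ d)) : Fin d → ℝ :=
  fun k => ⨆ n, corner d M lab (substW d M X e ω (wordTake d M i n)) k

/-- The image `F(ω) = f(E(ω))` of the substitution map. -/
def Fset (d M : ℕ) (lab : Fin (M ^ d) → Fin d → Fin M) {Ω : Type*}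
    (X : List (Fin (M ^ d)) → Ω → Bool) (e : List (Fin (M ^ d))) (ω : Ω) :
    Set (Fin d → ℝ) :=
  {x | ∃ i, TInf d M X ω i ∧ PiTilde d M lab X e ω i = x}

/-- The substitution word `e = η ∈ Λ^K` has length `K ≥ 1` and its first symbol labels
an inner cube. -/
def EtaSpec (d M K : ℕ) (e : List (Fin (M ^ d))) : Prop :=
  1 ≤ K ∧ e.length = K ∧ ∃ a l, e = a :: l ∧ a ∉ LamB d M

/-- `diam Q_𝚠 = M^{-|𝚠|}` (in the max-norm). -/
def diamQ (d M : ℕ) (w : List (Fin (M ^ d))) : ℝ := ((M : ℝ) ^ w.length)⁻¹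

/-- The quantity `κ(s,K)` from the paper. -/
def kappa (d M : ℕ) (p : ℝ) (K : ℕ) (s : ℝ) : ℝ :=
  1 - (((M : ℝ) - 2) ^ d / (M : ℝ) ^ d) * (1 - (M : ℝ) ^ (-(s * (K : ℝ)))) *
      (1 - p) ^ (M ^ d - (M - 2) ^ d)

/-- The quantity `κ' = lim_{K→∞} κ(s,K)` from the paper. -/
def kappa' (d M : ℕ) (p : ℝ) : ℝ :=
  1 - (((M : ℝ) - 2) ^ d / (M : ℝ) ^ d) * (1 - p) ^ (M ^ d - (M - 2) ^ d)

/-- The random sums `Y^t_n(ω) = Σ_{𝚒∈T_n(ω)} diam(Q_{𝚒̃})^t`. -/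
def Yt (d M : ℕ) {Ω : Type*} (X : List (Fin (M ^ d)) → Ω → Bool)
    (e : List (Fin (M ^ d))) (t : ℝ) (n : ℕ) (ω : Ω) : ℝ :=
  ∑ v : Fin n → Fin (M ^ d),
    if Alive d M X ω (List.ofFn v) then (diamQ d M (substW d M X e ω (List.ofFn v))) ^ t
    else 0

/-! ### Quasisymmetric maps -/

/-- `f` satisfies the quasisymmetry estimate with control function `η`. -/
def IsQSWith {α β : Type*} [PseudoMetricSpace α] [PseudoMetricSpace β]
    (η : ℝ≥0 → ℝ≥0) (f : α → β) : Prop :=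
  ∀ x y z : α, x ≠ z →
    nndist (f x) (f y) / nndist (f x) (f z) ≤ η (nndist x y / nndist x z)

/-- A homeomorphism is quasisymmetric if it admits a control function which is a
homeomorphism of `[0,∞)`. -/
def IsQSHomeo {α β : Type*} [MetricSpace α] [MetricSpace β] (f : α ≃ₜ β) : Prop :=
  ∃ η : ℝ≥0 ≃ₜ ℝ≥0, IsQSWith (⇑η) (⇑f)

/-! ### The auxiliary map g and the extension of f -/

/-- `g : [0,1]^d → [0,1]^d` is an `L`-bi-Lipschitz bijection of the unit cube, equal to the
identity on the boundary, mapping `I = (1-2/M)[0,1]^d` homothetically onto `(1-2/M)Q_η`. -/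
def GSpec (d M K : ℕ) (lab : Fin (M ^ d) → Fin d → Fin M) (e : List (Fin (M ^ d)))
    (L : ℝ) (g : (Fin d → ℝ) → (Fin d → ℝ)) : Prop :=
  Set.BijOn g (cube d M lab ([])) (cube d M lab ([])) ∧
    (∀ x ∈ cube d M lab ([]), ∀ y ∈ cube d M lab ([]),
      L⁻¹ * dist x y ≤ dist (g x) (g y) ∧ dist (g x) (g y) ≤ L * dist x y) ∧
    (∀ x ∈ frontier (cube d M lab ([] : List (Fin (M ^ d)))), g x = x) ∧
    (∃ v : Fin d → ℝ,
      ∀ x ∈ concCube d (fun _ => (0 : ℝ)) 1 (1 - 2 / (M : ℝ)),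
        g x = ((M : ℝ) ^ K)⁻¹ • x + v) ∧
    g '' concCube d (fun _ => (0 : ℝ)) 1 (1 - 2 / (M : ℝ)) =
      concCube d (corner d M lab e) (((M : ℝ) ^ K)⁻¹) (1 - 2 / (M : ℝ))

/-- `F` is (the coding of) the extension of the substitution map to `[0,1]^d`:
on surviving words it is the substitution map, and on a word whose largest surviving
prefix is `𝚒|_n` it is given by the two cases of the definition in the paper. -/
def ExtMapSpec (d M : ℕ) (lab : Fin (M ^ d) → Fin d → Fin M) {Ω : Type*}
    (X : List (Fin (M ^ d)) → Ω → Bool) (e : List (Fin (M ^ d)))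
    (g : (Fin d → ℝ) → (Fin d → ℝ)) (ω : Ω)
    (F : (ℕ → Fin (M ^ d)) → (Fin d → ℝ)) : Prop :=
  (∀ i, TInf d M X ω i → F i = PiTilde d M lab X e ω i) ∧
    ∀ (i : ℕ → Fin (M ^ d)) (n : ℕ),
      Alive d M X ω (wordTake d M i n) → ¬ Alive d M X ω (wordTake d M i (n + 1)) →
        ((∃ j ∈ LamB d M, Alive d M X ω (wordTake d M i n ++ [j])) →
          F i = hQ d M lab (substW d M X e ω (wordTake d M i n))
              (PiInf d M lab (shiftW d M n i))) ∧
        ((∀ j ∈ LamB d M, ¬ Alive d M X ω (wordTake d M i n ++ [j])) →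
          F i = hQ d M lab (substW d M X e ω (wordTake d M i n))
              (g (PiInf d M lab (shiftW d M n i))))


section Words

variable {d M : ℕ} {Ω : Type*} {X : List (Fin (M ^ d)) → Ω → Bool}
  {e : List (Fin (M ^ d))} {ω : Ω}

lemma substAux_append (pfx u v : List (Fin (M ^ d))) :
    substAux d M X e ω pfx (u ++ v) =
      substAux d M X e ω pfx u ++ substAux d M X e ω (pfx ++ u) v := by
  induction u generalizing pfx with
  | nil => simp [substAux]
  | cons a u ih => simp [substAux, ih]

lemma substW_append_singleton (w : List (Fin (M ^ d))) (i : Fin (M ^ d)) :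
    substW d M X e ω (w ++ [i]) =
      substW d M X e ω w ++ (if BdryDead d M X ω w then e ++ [i] else [i]) := by
  simp [substW, substAux_append, substAux]

lemma length_substW_append_singleton (w : List (Fin (M ^ d))) (i : Fin (M ^ d)) :
    (substW d M X e ω (w ++ [i])).length =
      (substW d M X e ω w).length + (if BdryDead d M X ω w then e.length + 1 else 1) := by
  rw [substW_append_singleton]
  split_ifs <;> simp

lemma diamQ_append (u v : List (Fin (M ^ d))) :
    diamQ d M (u ++ v) = diamQ d M u * diamQ d M v := by
  simp only [diamQ, List.length_append, pow_add, mul_inv]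

lemma diamQ_nonneg (w : List (Fin (M ^ d))) : 0 ≤ diamQ d M w := by
  unfold diamQ; positivity

lemma alive_nil : Alive d M X ω [] :=
  fun _ hu hpre => absurd (List.prefix_nil.mp hpre) hu

lemma alive_append_singleton (w : List (Fin (M ^ d))) (j : Fin (M ^ d)) :
    Alive d M X ω (w ++ [j]) ↔ Alive d M X ω w ∧ X (w ++ [j]) ω = true := by
  constructor
  · intro h
    exact ⟨fun u hu hpre => h u hu (hpre.trans (List.prefix_append _ _)),
      h _ (by simp) List.prefix_rfl⟩
  · rintro ⟨hw, hXwj⟩ u hu hpre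
    rcases List.prefix_concat_iff.mp hpre with rfl | hpre'
    · exact hXwj
    · exact hw u hu hpre'

lemma bdryDead_iff (hw : Alive d M X ω w) :
    BdryDead d M X ω w ↔ ∀ j ∈ LamB d M, X (w ++ [j]) ω = false := by
  simp [BdryDead, alive_append_singleton, hw]

end Words

lemma measurable_of_mem_iSup_comap {ι Ω : Type*} {X : ι → Ω → Bool} {s : Set ι} {u : ι}
    (hu : u ∈ s) : Measurable[⨆ v ∈ s, MeasurableSpace.comap (X v) ⊤] (X u) :=
  Measurable.of_comap_le (le_iSup₂_of_le u hu le_rfl)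

section Measurability

variable {d M : ℕ} {Ω : Type*} {X : List (Fin (M ^ d)) → Ω → Bool}
  {e : List (Fin (M ^ d))} {n : ℕ} {u : List (Fin (M ^ d))}

lemma measurableSet_alive (hu : u.length ≤ n) :
    MeasurableSet[Bsig d M X n] {ω | Alive d M X ω u} := by
  induction u using List.reverseRecOn with
  | nil => simp only [alive_nil, Set.ofPred_true]; exact MeasurableSet.univ
  | append_singleton u j ih =>
    simp only [List.length_append, List.length_singleton] at hu
    simp only [alive_append_singleton, Set.ofPred_and]
    exact (ih (by omega)).inter
      (measurable_of_mem_iSup_comap (by simpa using hu) (measurableSet_singleton true))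

lemma measurableSet_bdryDead (hu : u.length + 1 ≤ n) :
    MeasurableSet[Bsig d M X n] {ω | BdryDead d M X ω u} := by
  simp only [BdryDead, Set.ofPred_forall]
  exact MeasurableSet.iInter fun _ => MeasurableSet.iInter fun _ =>
    (measurableSet_alive (by simpa using hu)).compl

lemma measurable_length_substW (hu : u.length ≤ n) :
    Measurable[Bsig d M X n] fun ω => (substW d M X e ω u).length := by
  induction u using List.reverseRecOn with
  | nil => exact measurable_const
  | append_singleton u j ih =>
    simp only [List.length_append, List.length_singleton] at hu
    simp only [length_substW_append_singleton]
    exact (ih (by omega)).add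
      (Measurable.ite (measurableSet_bdryDead hu) measurable_const measurable_const)

end Measurability

section Bernoulli

variable {ι Ω : Type*} [MeasurableSpace Ω] {P : Measure Ω} [IsProbabilityMeasure P]
  {Y : ι → Ω → Bool} {p : ℝ}

lemma measure_true_and_forall_false (hYm : ∀ i, Measurable (Y i)) (hY : iIndepFun Y P)
    (hYp : ∀ i, P {ω | Y i ω = true} = ENNReal.ofReal p) {a : ι} {B : Finset ι}
    (ha : a ∉ B) :
    P {ω | Y a ω = true ∧ ∀ b ∈ B, Y b ω = false} =
      ENNReal.ofReal p * (1 - ENNReal.ofReal p) ^ B.card := by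
  have hfalse : ∀ b, P (Y b ⁻¹' {false}) = 1 - ENNReal.ofReal p := fun b => by
    have hcompl : Y b ⁻¹' {false} = (Y b ⁻¹' {true})ᶜ := by ext; simp
    rw [hcompl, prob_compl_eq_one_sub (hYm b (measurableSet_singleton true))]
    exact congrArg _ (hYp b)
  have hset : {ω | Y a ω = true ∧ ∀ b ∈ B, Y b ω = false} =
      ⋂ i ∈ insert a B, Y i ⁻¹' {decide (i = a)} := by
    ext ω
    simp only [Set.mem_ofPred_eq, Set.mem_iInter, Finset.mem_insert, Set.mem_preimage,
      Set.mem_singleton_iff, forall_eq_or_imp, decide_true]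
    refine and_congr_right fun _ => forall₂_congr fun b hb => ?_
    rw [decide_eq_false (ne_of_mem_of_not_mem hb ha)]
  rw [hset, hY.measure_inter_preimage_eq_mul _ (fun _ _ => measurableSet_singleton _),
    Finset.prod_insert ha, decide_eq_true rfl, Finset.prod_congr rfl fun b hb => by
      rw [decide_eq_false (ne_of_mem_of_not_mem hb ha), hfalse], Finset.prod_const]
  exact congrArg (· * _) (hYp a)

end Bernoulli

section Offspring

variable {ι Ω : Type*} [Fintype ι] {Y : ι → Ω → Bool}

/-- A surviving child `i` weighs `c₁` when every child in `B` has died (the substitution by `η`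
fires) and `c₂` otherwise. -/
def offspringWeight (Y : ι → Ω → Bool) (B : Finset ι) (c₁ c₂ : ℝ) (ω : Ω) : ℝ :=
  ∑ i, if Y i ω = true then (if ∀ b ∈ B, Y b ω = false then c₁ else c₂) else 0

lemma measurableSet_forall_false {m : MeasurableSpace Ω} (hYm : ∀ i, Measurable[m] (Y i))
    (B : Finset ι) : MeasurableSet[m] {ω | ∀ b ∈ B, Y b ω = false} := by
  simp only [Set.ofPred_forall]
  exact MeasurableSet.iInter fun b => MeasurableSet.iInter fun _ =>
    hYm b (measurableSet_singleton false)

lemma measurable_offspringWeight {m : MeasurableSpace Ω} (hYm : ∀ i, Measurable[m] (Y i))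
    (B : Finset ι) (c₁ c₂ : ℝ) : Measurable[m] (offspringWeight Y B c₁ c₂) :=
  Finset.measurable_sum _ fun i _ =>
    Measurable.ite (hYm i (measurableSet_singleton true))
      (Measurable.ite (measurableSet_forall_false hYm B) measurable_const measurable_const)
      measurable_const

lemma offspringWeight_eq_sum_indicator (B : Finset ι) (c₁ c₂ : ℝ) :
    offspringWeight Y B c₁ c₂ = fun ω => ∑ i,
      ({ω | Y i ω = true}.indicator (fun _ => c₂) ω +
        ({ω | Y i ω = true} ∩ {ω | ∀ b ∈ B, Y b ω = false}).indicator
          (fun _ => c₁ - c₂) ω) := by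
  funext ω
  refine Finset.sum_congr rfl fun i _ => ?_
  simp only [Set.indicator, Set.mem_inter_iff, Set.mem_ofPred_eq]
  split_ifs <;> simp_all

variable [MeasurableSpace Ω] {P : Measure Ω} [IsProbabilityMeasure P] {p : ℝ}

lemma integrable_offspringWeight (hYm : ∀ i, Measurable (Y i)) (B : Finset ι) (c₁ c₂ : ℝ) :
    Integrable (offspringWeight Y B c₁ c₂) P := by
  rw [offspringWeight_eq_sum_indicator]
  exact integrable_finsetSum _ fun i _ =>
    ((integrable_const c₂).indicator (hYm i (measurableSet_singleton true))).add
      ((integrable_const (c₁ - c₂)).indicator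
        ((hYm i (measurableSet_singleton true)).inter (measurableSet_forall_false hYm B)))

lemma integral_offspringWeight [DecidableEq ι] (hYm : ∀ i, Measurable (Y i))
    (hY : iIndepFun Y P) (hYp : ∀ i, P {ω | Y i ω = true} = ENNReal.ofReal p)
    (hp0 : 0 ≤ p) (hp1 : p ≤ 1)
    (B : Finset ι) (c₁ c₂ : ℝ) :
    ∫ ω, offspringWeight Y B c₁ c₂ ω ∂P =
      Fintype.card ι * p * c₂ + Bᶜ.card * (p * (1 - p) ^ B.card * (c₁ - c₂)) := by
  have hE : ∀ i, MeasurableSet {ω | Y i ω = true} := fun i => hYm i (measurableSet_singleton _)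
  have hED : ∀ i, MeasurableSet ({ω | Y i ω = true} ∩ {ω | ∀ b ∈ B, Y b ω = false}) :=
    fun i => (hE i).inter (measurableSet_forall_false hYm B)
  have hprob : ∀ i, P.real ({ω | Y i ω = true} ∩ {ω | ∀ b ∈ B, Y b ω = false}) =
      if i ∈ B then 0 else p * (1 - p) ^ B.card := by
    intro i
    split_ifs with hi
    · have hempty : {ω | Y i ω = true} ∩ {ω | ∀ b ∈ B, Y b ω = false} = ∅ :=
        Set.eq_empty_iff_forall_notMem.2 fun ω ⟨htrue, hfalse⟩ => by
          simp [hfalse i hi] at htrue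
      simp [hempty]
    · rw [measureReal_def, ← Set.ofPred_and, measure_true_and_forall_false hYm hY hYp hi,
        ← ENNReal.ofReal_one, ← ENNReal.ofReal_sub _ hp0, ← ENNReal.ofReal_pow (by linarith),
        ← ENNReal.ofReal_mul hp0, ENNReal.toReal_ofReal (by positivity)]
  have hterm : ∀ i, ∫ ω, ({ω | Y i ω = true}.indicator (fun _ => c₂) ω +
      ({ω | Y i ω = true} ∩ {ω | ∀ b ∈ B, Y b ω = false}).indicator
        (fun _ => c₁ - c₂) ω) ∂P =
      p * c₂ + (if i ∈ B then 0 else p * (1 - p) ^ B.card) * (c₁ - c₂) := fun i => by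
    rw [integral_add ((integrable_const _).indicator (hE i))
        ((integrable_const _).indicator (hED i)),
      integral_indicator_const _ (hE i), integral_indicator_const _ (hED i), hprob,
      measureReal_def, hYp, ENNReal.toReal_ofReal hp0, smul_eq_mul, smul_eq_mul]
  rw [offspringWeight_eq_sum_indicator, integral_finsetSum _ fun i _ =>
    ((integrable_const _).indicator (hE i)).add ((integrable_const _).indicator (hED i))]
  simp only [hterm, Finset.sum_add_distrib, Finset.sum_const, Finset.card_univ, nsmul_eq_mul,
    ite_mul, zero_mul, Finset.sum_ite, Finset.filter_not,
    Finset.filter_mem_eq_inter, Finset.univ_inter, ← Finset.compl_eq_univ_sdiff]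
  ring

end Offspring

lemma iSup_comap_le {ι Ω : Type*} [mΩ : MeasurableSpace Ω] {X : ι → Ω → Bool}
    (hXm : ∀ u, Measurable (X u)) (s : Set ι) :
    (⨆ u ∈ s, MeasurableSpace.comap (X u) ⊤) ≤ mΩ :=
  iSup₂_le fun u _ => (hXm u).comap_le

lemma condExp_mul_eq_mul_integral_of_indep {Ω : Type*} {m m' mΩ : MeasurableSpace Ω}
    {P : Measure Ω} [IsFiniteMeasure P] (hm : m ≤ mΩ) (hm' : m' ≤ mΩ) (hind : Indep m' m P)
    {g S : Ω → ℝ} {C : ℝ} (hg : StronglyMeasurable[m] g) (hgC : ∀ ω, ‖g ω‖ ≤ C)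
    (hS : StronglyMeasurable[m'] S) (hSi : Integrable S P) :
    P[g * S | m] =ᵐ[P] fun ω => g ω * ∫ x, S x ∂P := by
  have hgS : Integrable (g * S) P :=
    hSi.bdd_mul (hg.mono hm).aestronglyMeasurable (ae_of_all _ hgC)
  filter_upwards [condExp_mul_of_stronglyMeasurable_left hg hgS hSi,
    condExp_indep_eq hm' hm hS hind] with ω h1 h2
  rw [h1, Pi.mul_apply, h2]

section Percolation

variable {d M : ℕ} {Ω : Type*} {X : List (Fin (M ^ d)) → Ω → Bool}
  {e : List (Fin (M ^ d))} {n : ℕ} {w : List (Fin (M ^ d))} {s : ℝ}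

lemma Bsig_le [mΩ : MeasurableSpace Ω] (hXm : ∀ u, Measurable (X u)) : Bsig d M X n ≤ mΩ :=
  iSup_comap_le hXm _

lemma indep_iSup_comap_length_gt_Bsig [MeasurableSpace Ω] {P : Measure Ω}
    (hXm : ∀ u, Measurable (X u)) (hX : iIndepFun X P) (n : ℕ) :
    Indep (⨆ u ∈ {u : List (Fin (M ^ d)) | n < u.length}, MeasurableSpace.comap (X u) ⊤)
      (Bsig d M X n) P :=
  indep_iSup_of_disjoint (fun u => (hXm u).comap_le) hX.iIndep
    (Set.disjoint_left.2 fun _ h1 h2 => by simp only [Set.mem_ofPred_eq] at h1 h2; omega)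

def aliveWeight (X : List (Fin (M ^ d)) → Ω → Bool) (e : List (Fin (M ^ d))) (s : ℝ)
    (w : List (Fin (M ^ d))) (ω : Ω) : ℝ :=
  if Alive d M X ω w then diamQ d M (substW d M X e ω w) ^ s else 0

lemma stronglyMeasurable_aliveWeight (hw : w.length ≤ n) :
    StronglyMeasurable[Bsig d M X n] (aliveWeight X e s w) :=
  (Measurable.ite (measurableSet_alive hw)
    ((measurable_from_nat (f := fun k => (((M : ℝ) ^ k)⁻¹) ^ s)).comp
      (measurable_length_substW hw)) measurable_const).stronglyMeasurable

lemma norm_aliveWeight_le_one (hM : 1 ≤ M) (hs : 0 ≤ s) (ω : Ω) :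
    ‖aliveWeight X e s w ω‖ ≤ 1 := by
  have hM' : (1 : ℝ) ≤ M := by exact_mod_cast hM
  unfold aliveWeight diamQ
  split_ifs
  · rw [Real.norm_of_nonneg (by positivity)]
    exact Real.rpow_le_one (by positivity) (inv_le_one_of_one_le₀ (one_le_pow₀ hM')) hs
  · simp

lemma sum_aliveWeight_children (w : List (Fin (M ^ d))) (s : ℝ) (ω : Ω) :
    ∑ i, aliveWeight X e s (w ++ [i]) ω =
      aliveWeight X e s w ω *
        offspringWeight (fun i => X (w ++ [i])) (Finset.univ.filter (· ∈ LamB d M))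
          ((((M : ℝ) ^ (e.length + 1))⁻¹) ^ s) (((M : ℝ)⁻¹) ^ s) ω := by
  unfold aliveWeight offspringWeight
  by_cases hw : Alive d M X ω w
  · simp only [Finset.mul_sum, alive_append_singleton, hw, true_and,
      Finset.mem_filter, Finset.mem_univ, ← bdryDead_iff hw, substW_append_singleton,
      diamQ_append, Real.mul_rpow (diamQ_nonneg _) (diamQ_nonneg _)]
    refine Finset.sum_congr rfl fun i _ => ?_
    split_ifs <;> simp [diamQ]
  · simp [hw, alive_append_singleton]

end Percolation

lemma card_filter_mem_lamB (d M : ℕ) :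
    (Finset.univ.filter (· ∈ LamB d M)).card = M ^ d - (M - 2) ^ d := by
  have hfilter : Finset.univ.filter (· ∈ LamB d M) =
      Finset.univ.filter fun i : Fin (M ^ d) => (i : ℕ) < M ^ d - (M - 2) ^ d := by
    ext; simp only [Finset.mem_filter, Finset.mem_univ, true_and]; rfl
  rw [hfilter, Fin.card_filter_val_lt, min_eq_right (Nat.sub_le _ _)]

lemma card_compl_filter_mem_lamB (d M : ℕ) :
    (Finset.univ.filter (· ∈ LamB d M))ᶜ.card = (M - 2) ^ d := by
  rw [Finset.card_compl, Fintype.card_fin, card_filter_mem_lamB]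
  exact Nat.sub_sub_self (Nat.pow_le_pow_left (Nat.sub_le M 2) d)

lemma mean_offspringWeight_eq_kappa (d M K : ℕ) (hM : 2 ≤ M) (p s : ℝ) :
    ((M ^ d : ℕ) : ℝ) * p * ((M : ℝ)⁻¹) ^ s +
        ((M - 2) ^ d : ℕ) * (p * (1 - p) ^ (M ^ d - (M - 2) ^ d) *
          ((((M : ℝ) ^ (K + 1))⁻¹) ^ s - ((M : ℝ)⁻¹) ^ s)) =
      p * (M : ℝ) ^ ((d : ℝ) - s) * kappa d M p K s := by
  have hM0 : (0 : ℝ) < M := by exact_mod_cast (by omega : 0 < M)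
  have hc₁ : (((M : ℝ) ^ (K + 1))⁻¹) ^ s = (M : ℝ) ^ (-(s * K)) * (M : ℝ) ^ (-s) := by
    rw [Real.inv_rpow (by positivity), ← Real.rpow_natCast, ← Real.rpow_mul hM0.le,
      ← Real.rpow_neg hM0.le, ← Real.rpow_add hM0]
    push_cast; ring_nf
  have hc₂ : ((M : ℝ)⁻¹) ^ s = (M : ℝ) ^ (-s) := by
    rw [Real.inv_rpow hM0.le, Real.rpow_neg hM0.le]
  have hds : (M : ℝ) ^ ((d : ℝ) - s) = (M : ℝ) ^ d * (M : ℝ) ^ (-s) := by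
    rw [sub_eq_add_neg, Real.rpow_add hM0, Real.rpow_natCast]
  rw [hc₁, hc₂, hds, kappa, Nat.cast_pow, Nat.cast_pow, Nat.cast_sub hM, Nat.cast_ofNat]
  field_simp
  ring

theorem statement10_general
    (d M : ℕ) (hM : 3 ≤ M)
    (K : ℕ) (e : List (Fin (M ^ d))) (he : EtaSpec d M K e)
    {Ω : Type*} [MeasurableSpace Ω] (P : Measure Ω) [IsProbabilityMeasure P]
    (X : List (Fin (M ^ d)) → Ω → Bool) (p : ℝ) (hp0 : 0 < p) (hp1 : p < 1)
    (hX : PercSpec d M P X p)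
    (s : ℝ) (hs : 0 < s) (n : ℕ) (w : List (Fin (M ^ d))) (hw : w.length = n) :
    ∀ᵐ ω ∂P, Alive d M X ω w →
      MeasureTheory.condExp (Bsig d M X n) P
          (fun ω' => ∑ i : Fin (M ^ d),
            if Alive d M X ω' (w ++ [i])
            then diamQ d M (substW d M X e ω' (w ++ [i])) ^ s else 0) ω =
        diamQ d M (substW d M X e ω w) ^ s *
          (p * (M : ℝ) ^ ((d : ℝ) - s) * kappa d M p K s) := by
  obtain ⟨hXm, hXind, hXp⟩ := hX
  obtain ⟨-, rfl, -⟩ := he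
  set Y : Fin (M ^ d) → Ω → Bool := fun i => X (w ++ [i])
  have hY : iIndepFun Y P := hXind.precomp fun i j h => by simpa using h
  have hYm : ∀ i, Measurable[⨆ u ∈ {u : List (Fin (M ^ d)) | n < u.length},
      MeasurableSpace.comap (X u) ⊤] (Y i) :=
    fun i => measurable_of_mem_iSup_comap (by simp [hw])
  have hsplit : (fun ω => ∑ i, aliveWeight X e s (w ++ [i]) ω) = aliveWeight X e s w *
      offspringWeight Y (Finset.univ.filter (· ∈ LamB d M))
        ((((M : ℝ) ^ (e.length + 1))⁻¹) ^ s) (((M : ℝ)⁻¹) ^ s) :=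
    funext fun ω => sum_aliveWeight_children w s ω
  filter_upwards [condExp_mul_eq_mul_integral_of_indep (Bsig_le hXm) (iSup_comap_le hXm _)
    (indep_iSup_comap_length_gt_Bsig hXm hXind n) (stronglyMeasurable_aliveWeight hw.le)
    (norm_aliveWeight_le_one (by omega) hs.le)
    (measurable_offspringWeight hYm _ _ _).stronglyMeasurable
    (integrable_offspringWeight (fun _ => hXm _) _ _ _)] with ω hω hA
  change P[fun ω => ∑ i, aliveWeight X e s (w ++ [i]) ω | Bsig d M X n] ω = _
  rw [hsplit, hω, integral_offspringWeight (fun _ => hXm _) hY (fun _ => hXp _) hp0.le hp1.le,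
    Fintype.card_fin, card_filter_mem_lamB, card_compl_filter_mem_lamB,
    mean_offspringWeight_eq_kappa d M _ (by omega), aliveWeight, if_pos hA]

theorem statement10
    (d M : ℕ) (hd : 1 ≤ d) (hM : 3 ≤ M)
    (lab : Fin (M ^ d) → Fin d → Fin M) (hlab : LabSpec d M lab)
    (K : ℕ) (e : List (Fin (M ^ d))) (he : EtaSpec d M K e)
    {Ω : Type*} [MeasurableSpace Ω] (P : Measure Ω) [IsProbabilityMeasure P]
    (X : List (Fin (M ^ d)) → Ω → Bool) (p : ℝ) (hp0 : 0 < p) (hp1 : p < 1)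
    (hX : PercSpec d M P X p)
    (s : ℝ) (hs : 0 < s) (n : ℕ) (w : List (Fin (M ^ d))) (hw : w.length = n) :
    ∀ᵐ ω ∂P, Alive d M X ω w →
      MeasureTheory.condExp (Bsig d M X n) P
          (fun ω' => ∑ i : Fin (M ^ d),
            if Alive d M X ω' (w ++ [i])
            then diamQ d M (substW d M X e ω' (w ++ [i])) ^ s else 0) ω =
        diamQ d M (substW d M X e ω w) ^ s *
          (p * (M : ℝ) ^ ((d : ℝ) - s) * kappa d M p K s) :=
  statement10_general d M hM K e he P X p hp0 hp1 hX s hs n w hw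

end FractalPercolation
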